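/- Let G be a non-Hamiltonian graph with connectivity κ ≥ 2 and matching number m ≤ κ. Let C be a longest cycle of G, x₀ a vertex outside C connected to C by s internally disjoint paths ending at distinct vertices u₁,...,uₛ ∈ V(C). Then s = κ = m, and the component of G − V(C) containing x₀ is the single vertex x₀. -/

import Mathlib

/-!
Let `t i` be the successor of `u i` on `C`. If some `t j` were another attachment point `u i`,
replacing the edge `u j t j` of `C` by the detour `u j → x₀ → u i` along `P j` and `P i` would
give a longer cycle. Hence the `s` edges `u i t i` form a matching, and `s ≤ m ≤ κ ≤ s`.
A neighbour `y` of `x₀` off `C` would add the disjoint edge `x₀ y` to this matching,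
contradicting `m = s`.
-/

open SimpleGraph Finset

/-- The matching number of a graph: the largest size of a matching. -/
noncomputable def matchingNumber {V : Type*} [Fintype V] (G : SimpleGraph V) : ℕ :=
  sSup {n | ∃ M : G.Subgraph, M.IsMatching ∧ M.edgeSet.ncard = n}

/-- The vertex connectivity of a finite graph: the least size of a set `S` of vertices
whose removal either disconnects the graph or leaves at most one vertex. -/
noncomputable def vertexConnectivity {V : Type*} [Fintype V] (G : SimpleGraph V) : ℕ :=
  sInf {k | ∃ S : Finset V, S.card = k ∧
    (¬ (G.induce ((↑S : Set V)ᶜ)).Connected ∨ Fintype.card V ≤ k + 1)}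

/-- `b` is the successor of `a` along the closed walk `c` (with its fixed orientation). -/
def IsCycleSucc {V : Type*} {G : SimpleGraph V} {v : V} (c : G.Walk v v) (a b : V) : Prop :=
  ∃ k < c.length, c.getVert k = a ∧ c.getVert (k + 1) = b

/-- The family `F` of graphs `H` with `K_{p,q} ⊆ H ⊆ K_p ∨ (q·K_1)` for some `q ≥ p + 1 ≥ 3`:
the vertices split into a set `P` of size `p ≥ 2` and a set `Q` of size `q ≥ p + 1` such that
all `P`–`Q` edges are present and `Q` is independent. -/
def inFamilyF {V : Type*} [Fintype V] [DecidableEq V] (G : SimpleGraph V) : Prop :=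
  ∃ P Q : Finset V, P ∪ Q = Finset.univ ∧ Disjoint P Q ∧
    Q.card ≥ P.card + 1 ∧ P.card ≥ 2 ∧
    (∀ a ∈ P, ∀ b ∈ Q, G.Adj a b) ∧
    (∀ a ∈ Q, ∀ b ∈ Q, ¬ G.Adj a b)

namespace SimpleGraph

variable {V : Type*} {G : SimpleGraph V}

lemma ncard_edgeSet_le_matchingNumber [Fintype V] {M : G.Subgraph} (hM : M.IsMatching) :
    M.edgeSet.ncard ≤ matchingNumber G := by
  refine le_csSup ⟨G.edgeSet.ncard, ?_⟩ ⟨M, hM, rfl⟩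
  rintro _ ⟨N, -, rfl⟩
  exact Set.ncard_le_ncard N.edgeSet_subset (Set.toFinite _)

lemma card_le_matchingNumber [Fintype V] {ι : Type*} {f g : ι → V} (hf : f.Injective)
    (hg : g.Injective) (hfg : ∀ i j, f i ≠ g j) (hadj : ∀ i, G.Adj (f i) (g i)) :
    Nat.card ι ≤ matchingNumber G := by
  have hM : (⨆ i, G.subgraphOfAdj (hadj i)).IsMatching := by
    refine Subgraph.IsMatching.iSup (fun i ↦ .subgraphOfAdj _) fun i j hij ↦ ?_
    simp only [support_subgraphOfAdj, Set.disjoint_left, Set.mem_insert_iff,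
      Set.mem_singleton_iff]
    rintro x (rfl | rfl) (h | h)
    exacts [hf.ne hij h, hfg i j h, hfg j i h.symm, hg.ne hij h]
  have hedge : Function.Injective fun i ↦ s(f i, g i) := by
    intro i j hij
    rcases Sym2.eq_iff.mp hij with ⟨h, -⟩ | ⟨h, -⟩
    · exact hf h
    · exact absurd h (hfg i j)
  calc Nat.card ι = (Set.range fun i ↦ s(f i, g i)).ncard :=
        (Set.ncard_range_of_injective hedge).symm
    _ = (⨆ i, G.subgraphOfAdj (hadj i)).edgeSet.ncard := by
      rw [Subgraph.edgeSet_iSup, Set.range_eq_iUnion]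
      simp only [edgeSet_subgraphOfAdj]
    _ ≤ matchingNumber G := ncard_edgeSet_le_matchingNumber hM

lemma card_add_one_le_matchingNumber [Fintype V] {ι : Type*} {f g : ι → V} {S : Set V}
    {x y : V} (hf : f.Injective) (hg : g.Injective) (hfg : ∀ i j, f i ≠ g j)
    (hadj : ∀ i, G.Adj (f i) (g i)) (hS : ∀ i, f i ∈ S ∧ g i ∈ S) (hx : x ∉ S) (hy : y ∉ S)
    (hxy : G.Adj x y) : Nat.card ι + 1 ≤ matchingNumber G := by
  have := Finite.of_injective f hf
  have h := card_le_matchingNumber (ι := ι ⊕ Unit) (f := Sum.elim f fun _ ↦ x)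
    (g := Sum.elim g fun _ ↦ y)
    (hf.sumElim (Function.injective_of_subsingleton _) fun i _ h ↦ hx (h ▸ (hS i).1))
    (hg.sumElim (Function.injective_of_subsingleton _) fun i _ h ↦ hy (h ▸ (hS i).2))
    (by
      rintro (i | _) (j | _) h <;> simp only [Sum.elim_inl, Sum.elim_inr] at h
      exacts [hfg i j h, hy (h ▸ (hS i).1), hx (h ▸ (hS j).2), hxy.ne h])
    (by rintro (i | _); exacts [hadj i, hxy])
  rwa [Nat.card_sum, Nat.card_unique (α := Unit)] at h

namespace Walk

lemma IsPath.append {u v w : V} {p : G.Walk u v} {q : G.Walk v w} (hp : p.IsPath)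
    (hq : q.IsPath) (hpq : ∀ x ∈ p.support, x ∈ q.support → x = v) : (p.append q).IsPath := by
  have hq' := hq.support_nodup
  rw [← q.cons_tail_support, List.nodup_cons] at hq'
  refine IsPath.mk' ?_
  rw [support_append]
  refine hp.support_nodup.append hq'.2 fun x hxp hxq ↦ ?_
  obtain rfl := hpq x hxp (List.mem_of_mem_tail hxq)
  exact hq'.1 hxq

variable [DecidableEq V] {v a b : V} {c : G.Walk v v}

lemma snd_rotate_mem_support (ha : a ∈ c.support) : (c.rotate a ha).snd ∈ c.support :=
  (c.mem_support_rotate_iff a ha).mp (getVert_mem_support _ 1)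

lemma IsCycle.eq_of_snd_rotate_eq (hc : c.IsCycle) (ha : a ∈ c.support) (hb : b ∈ c.support)
    (h : (c.rotate a ha).snd = (c.rotate b hb).snd) : a = b := by
  have hmem : ∀ x (hx : x ∈ c.support),
      (c.rotate x hx).firstDart (by simpa using hc.not_nil) ∈ c.darts := fun x hx ↦ by
    rw [firstDart_eq_head_darts, ← (c.rotate_darts x hx).mem_iff]
    exact List.head_mem _
  -- A cycle enters each of its vertices along exactly one dart.
  have hnodup : (c.darts.map (·.snd)).Nodup := c.map_snd_darts ▸ hc.support_nodup
  exact congrArg (·.toProd.1) (List.inj_on_of_nodup_map hnodup (hmem a ha) (hmem b hb) h)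

lemma IsCycle.exists_longer_of_bypass (hc : c.IsCycle) (ha : a ∈ c.support)
    {R : G.Walk a (c.rotate a ha).snd} (hR : R.IsPath) (hlen : 2 ≤ R.length)
    (hRc : ∀ w ∈ R.support, w ∈ c.support → w = a ∨ w = (c.rotate a ha).snd) :
    ∃ (w : V) (d : G.Walk w w), d.IsCycle ∧ c.length < d.length := by
  have hc' := hc.rotate ha
  have hQ := hc'.isPath_tail
  refine ⟨_, (c.rotate a ha).tail.append R, hQ.isCycle_append hR ?_ (.inr hlen), ?_⟩
  · intro x hxQ hxR
    have hxc : x ∈ c.support := by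
      rw [← c.mem_support_rotate_iff a ha, ← (c.rotate a ha).cons_tail_eq hc'.not_nil]
      exact List.mem_cons_of_mem _ (List.mem_of_mem_tail hxQ)
    have hR' := hR.support_nodup
    have hQ' := hQ.support_nodup
    rw [← R.cons_tail_support, List.nodup_cons] at hR'
    rw [← cons_tail_support, List.nodup_cons] at hQ'
    rcases hRc x (List.mem_of_mem_tail hxR) hxc with rfl | rfl
    · exact hR'.1 hxR
    · exact hQ'.1 hxQ
  · have := length_tail_add_one hc'.not_nil
    rw [length_rotate] at this
    rw [length_append]
    omega

lemma IsCycle.snd_rotate_ne_of_longest (hc : c.IsCycle)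
    (hlong : ∀ (w : V) (d : G.Walk w w), d.IsCycle → d.length ≤ c.length) {x : V}
    (hx : x ∉ c.support) (ha : a ∈ c.support) {p : G.Walk x a} {q : G.Walk x b}
    (hp : p.IsPath) (hq : q.IsPath) (hpq : ∀ w ∈ p.support, w ∈ q.support → w = x)
    (hpc : ∀ w ∈ p.support, w ∈ c.support → w = a)
    (hqc : ∀ w ∈ q.support, w ∈ c.support → w = b) : (c.rotate a ha).snd ≠ b := by
  intro h
  have hb : b ∈ c.support := h ▸ snd_rotate_mem_support ha
  have hlen : ∀ {y} (r : G.Walk x y), y ∈ c.support → 1 ≤ r.length := fun r hy ↦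
    Nat.one_le_iff_ne_zero.mpr fun h ↦ hx (eq_of_length_eq_zero h ▸ hy)
  have hR : (p.reverse.append q).IsPath :=
    hp.reverse.append hq fun w hwp hwq ↦ hpq w (by simpa using hwp) hwq
  obtain ⟨w, d, hd, hlt⟩ := hc.exists_longer_of_bypass ha
    (R := (p.reverse.append q).copy rfl h.symm) ((isPath_copy ..).mpr hR)
    (by simpa only [length_copy, length_append, length_reverse] using
      Nat.add_le_add (hlen p ha) (hlen q hb))
    (by
      intro w hw hwc
      rw [support_copy, mem_support_append_iff, support_reverse, List.mem_reverse] at hw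
      rcases hw with hw | hw
      exacts [.inl (hpc w hw hwc), .inr ((hqc w hw hwc).trans h.symm)])
  exact (hlong w d hd).not_gt hlt

end Walk

end SimpleGraph

theorem stmt_2_general {V : Type*} [Fintype V] [DecidableEq V] (G : SimpleGraph V)
    (hm : matchingNumber G ≤ vertexConnectivity G)
    {v : V} (c : G.Walk v v) (hc : c.IsCycle)
    (hlong : ∀ (w : V) (d : G.Walk w w), d.IsCycle → d.length ≤ c.length)
    (x₀ : V) (hx₀ : x₀ ∉ c.support)
    (s : ℕ) (hs : vertexConnectivity G ≤ s)
    (u : Fin s → V) (huinj : Function.Injective u)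
    (humem : ∀ i, u i ∈ c.support)
    (P : ∀ i : Fin s, G.Walk x₀ (u i)) (hP : ∀ i, (P i).IsPath)
    (hdisj : ∀ i j, i ≠ j → ∀ w, w ∈ (P i).support → w ∈ (P j).support → w = x₀)
    (honC : ∀ i, ∀ w ∈ (P i).support, w ∈ c.support → w = u i) :
    s = vertexConnectivity G ∧ s = matchingNumber G ∧
      ∀ (x : V) (hx : x ∉ c.support),
        (G.induce {w | w ∉ c.support}).Reachable ⟨x₀, hx₀⟩ ⟨x, hx⟩ → x = x₀ := by
  set t : Fin s → V := fun i ↦ (c.rotate (u i) (humem i)).snd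
  have hadj : ∀ i, G.Adj (u i) (t i) := fun i ↦ Walk.adj_snd (by simpa using hc.not_nil)
  have hut : ∀ i j, u i ≠ t j := fun i j h ↦ by
    obtain rfl | hij := eq_or_ne i j
    · exact (hadj i).ne h
    · exact hc.snd_rotate_ne_of_longest hlong hx₀ (humem j) (hP j) (hP i)
        (hdisj j i hij.symm) (honC j) (honC i) h.symm
  have ht_inj : t.Injective := fun i j h ↦ huinj (hc.eq_of_snd_rotate_eq _ _ h)
  have hsm : s ≤ matchingNumber G := by
    simpa using card_le_matchingNumber huinj ht_inj hut hadj
  refine ⟨by omega, by omega, fun x hx ⟨w⟩ ↦ ?_⟩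
  by_contra hne
  have hwnil : ¬ w.Nil := fun h ↦ hne (congrArg Subtype.val h.eq).symm
  have hsm' := card_add_one_le_matchingNumber huinj ht_inj hut hadj (S := {w | w ∈ c.support})
    (fun i ↦ ⟨humem i, Walk.snd_rotate_mem_support (humem i)⟩)
    hx₀ w.snd.2 (by simpa using w.adj_snd hwnil)
  rw [Nat.card_fin] at hsm'
  omega

/-- `s = κ = m`, and the component of `G - V(C)` containing `x₀` is the single vertex `x₀`. -/
theorem stmt_2 {V : Type*} [Fintype V] [DecidableEq V] (G : SimpleGraph V)
    (hκ : 2 ≤ vertexConnectivity G)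
    (hm : matchingNumber G ≤ vertexConnectivity G)
    (hnotham : ¬ G.IsHamiltonian)
    {v : V} (c : G.Walk v v) (hc : c.IsCycle)
    (hlong : ∀ (w : V) (d : G.Walk w w), d.IsCycle → d.length ≤ c.length)
    (x₀ : V) (hx₀ : x₀ ∉ c.support)
    (s : ℕ) (hs : vertexConnectivity G ≤ s)
    (u : Fin s → V) (huinj : Function.Injective u)
    (humem : ∀ i, u i ∈ c.support)
    (P : ∀ i : Fin s, G.Walk x₀ (u i)) (hP : ∀ i, (P i).IsPath)
    (hdisj : ∀ i j, i ≠ j → ∀ w, w ∈ (P i).support → w ∈ (P j).support → w = x₀)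
    (honC : ∀ i, ∀ w ∈ (P i).support, w ∈ c.support → w = u i) :
    s = vertexConnectivity G ∧ s = matchingNumber G ∧
      ∀ (x : V) (hx : x ∉ c.support),
        (G.induce {w | w ∉ c.support}).Reachable ⟨x₀, hx₀⟩ ⟨x, hx⟩ → x = x₀ :=
  stmt_2_general G hm c hc hlong x₀ hx₀ s hs u huinj humem P hP hdisj honC
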